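/- Let φ : ℝ² → ℝ be twice continuously differentiable with compact support contained in the open unit disc D1, and let f = d d⊥ φ be the symmetric 2-tensor field with components f11 = −∂²φ/∂x1∂x2, f12 = (1/2)(∂²φ/∂x1² − ∂²φ/∂x2²), f22 = ∂²φ/∂x1∂x2. Then for every x ∈ ℝ²: φ(x) = (1/(2 u2)) ∫₀^∞ Lf(x + s e1) ds = −(1/(2 u2)) ∫₀^∞ Tf(x + s e1) ds. -/

import Mathlib

noncomputable section

open MeasureTheory

/-- The divergent beam transform `X_w h (x) = ∫₀^∞ h(x + t w) dt`. -/
def Xbeam (w : ℝ × ℝ) (h : ℝ × ℝ → ℝ) (x : ℝ × ℝ) : ℝ :=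
  ∫ t in Set.Ioi (0 : ℝ), h (x + t • w)

/-- The k-th moment divergent beam transform `X_w^k h (x) = ∫₀^∞ t^k h(x + t w) dt`. -/
def Xmom (k : ℕ) (w : ℝ × ℝ) (h : ℝ × ℝ → ℝ) (x : ℝ × ℝ) : ℝ :=
  ∫ t in Set.Ioi (0 : ℝ), t ^ k * h (x + t • w)

/-- The directional derivative `D_w h = w ⋅ ∇h`. -/
def Dir (w : ℝ × ℝ) (h : ℝ × ℝ → ℝ) (x : ℝ × ℝ) : ℝ :=
  fderiv ℝ h x w

/-- Support contained in the open unit disc `D1`. -/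
def SuppInDisc (h : ℝ × ℝ → ℝ) : Prop :=
  ∀ x : ℝ × ℝ, 1 ≤ x.1 ^ 2 + x.2 ^ 2 → h x = 0

/-- The longitudinal V-line transform. -/
def VlineL (u1 u2 : ℝ) (f11 f12 f22 : ℝ × ℝ → ℝ) : ℝ × ℝ → ℝ :=
  Xbeam (u1, u2) (fun y => u1 ^ 2 * f11 y + 2 * u1 * u2 * f12 y + u2 ^ 2 * f22 y)
    + Xbeam (-u1, u2) (fun y => u1 ^ 2 * f11 y - 2 * u1 * u2 * f12 y + u2 ^ 2 * f22 y)

/-- The transverse V-line transform. -/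
def VlineT (u1 u2 : ℝ) (f11 f12 f22 : ℝ × ℝ → ℝ) : ℝ × ℝ → ℝ :=
  Xbeam (u1, u2) (fun y => u2 ^ 2 * f11 y - 2 * u1 * u2 * f12 y + u1 ^ 2 * f22 y)
    + Xbeam (-u1, u2) (fun y => u2 ^ 2 * f11 y + 2 * u1 * u2 * f12 y + u1 ^ 2 * f22 y)

/-- The mixed V-line transform. -/
def VlineM (u1 u2 : ℝ) (f11 f12 f22 : ℝ × ℝ → ℝ) : ℝ × ℝ → ℝ :=
  Xbeam (u1, u2) (fun y => -(u1 * u2) * f11 y + (u1 ^ 2 - u2 ^ 2) * f12 y + u1 * u2 * f22 y)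
    + Xbeam (-u1, u2) (fun y => u1 * u2 * f11 y + (u1 ^ 2 - u2 ^ 2) * f12 y - u1 * u2 * f22 y)

/-- The k-th moment longitudinal V-line transform. -/
def VlineLk (k : ℕ) (u1 u2 : ℝ) (f11 f12 f22 : ℝ × ℝ → ℝ) : ℝ × ℝ → ℝ :=
  Xmom k (u1, u2) (fun y => u1 ^ 2 * f11 y + 2 * u1 * u2 * f12 y + u2 ^ 2 * f22 y)
    + Xmom k (-u1, u2) (fun y => u1 ^ 2 * f11 y - 2 * u1 * u2 * f12 y + u2 ^ 2 * f22 y)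

/-- The k-th moment transverse V-line transform. -/
def VlineTk (k : ℕ) (u1 u2 : ℝ) (f11 f12 f22 : ℝ × ℝ → ℝ) : ℝ × ℝ → ℝ :=
  Xmom k (u1, u2) (fun y => u2 ^ 2 * f11 y - 2 * u1 * u2 * f12 y + u1 ^ 2 * f22 y)
    + Xmom k (-u1, u2) (fun y => u2 ^ 2 * f11 y + 2 * u1 * u2 * f12 y + u1 ^ 2 * f22 y)

/-- The k-th moment mixed V-line transform. -/
def VlineMk (k : ℕ) (u1 u2 : ℝ) (f11 f12 f22 : ℝ × ℝ → ℝ) : ℝ × ℝ → ℝ :=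
  Xmom k (u1, u2) (fun y => -(u1 * u2) * f11 y + (u1 ^ 2 - u2 ^ 2) * f12 y + u1 * u2 * f22 y)
    + Xmom k (-u1, u2) (fun y => u1 * u2 * f11 y + (u1 ^ 2 - u2 ^ 2) * f12 y - u1 * u2 * f22 y)

/-!
The quadratic form of `f = d d⊥ φ` in a direction `w = (a, b)` is the mixed derivative
`D_w D_{w⊥} φ` with `w⊥ = (b, -a)`, and for compactly supported `g` the fundamental theorem of
calculus along rays gives `X_w (D_w g) = -g`. So the two branches of `Lf` are
`-D_{(u2,-u1)} φ` and `-D_{(u2,u1)} φ`, which add up to `-2 u2 ∂₁φ`, and a last application of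
`X_{e1} D_{e1} = -id` recovers `φ`. As `d d⊥ φ` is trace-free, `Tf = -Lf`.
-/

open Set

section LineIntegral

variable {E : Type*} [NormedAddCommGroup E] [NormedSpace ℝ E]

theorem hasCompactSupport_comp_line {g : E → ℝ} (hg : HasCompactSupport g) (x : E) {w : E}
    (hw : w ≠ 0) : HasCompactSupport fun t : ℝ => g (x + t • w) :=
  (hg.comp_homeomorph (Homeomorph.addLeft x)).comp_isClosedEmbedding
    (isClosedEmbedding_smul_left hw)

theorem deriv_comp_line {g : E → ℝ} (hg : Differentiable ℝ g) (x w : E) (t : ℝ) :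
    deriv (fun s : ℝ => g (x + s • w)) t = fderiv ℝ g (x + t • w) w := by
  have hline : HasDerivAt (fun s : ℝ => x + s • w) w t := by
    simpa using ((hasDerivAt_id t).smul_const w).const_add x
  exact ((hg _).hasFDerivAt.comp_hasDerivAt t hline).deriv

theorem integral_Ioi_fderiv_comp_line {g : E → ℝ} (hg : ContDiff ℝ 1 g)
    (hc : HasCompactSupport g) (x : E) {w : E} (hw : w ≠ 0) :
    ∫ t in Ioi (0 : ℝ), fderiv ℝ g (x + t • w) w = -g x := by
  have hline : ContDiff ℝ 1 fun t : ℝ => g (x + t • w) :=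
    hg.comp (contDiff_const.add (contDiff_id.smul contDiff_const))
  simpa [deriv_comp_line (hg.differentiable one_ne_zero)] using
    (hasCompactSupport_comp_line hc x hw).integral_Ioi_deriv_eq hline 0

end LineIntegral

theorem SuppInDisc.hasCompactSupport {h : ℝ × ℝ → ℝ} (hh : SuppInDisc h) :
    HasCompactSupport h := by
  refine HasCompactSupport.intro (isCompact_closedBall (0 : ℝ × ℝ) 1) fun x hx => hh x ?_
  rw [Metric.mem_closedBall, dist_zero_right, not_le, Prod.norm_def, lt_max_iff,
    Real.norm_eq_abs, Real.norm_eq_abs] at hx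
  rcases hx with hx | hx <;> nlinarith [sq_abs x.1, sq_abs x.2, sq_nonneg x.1, sq_nonneg x.2]

theorem Xbeam_const_mul (w : ℝ × ℝ) (h : ℝ × ℝ → ℝ) (c : ℝ) (x : ℝ × ℝ) :
    Xbeam w (fun y => c * h y) x = c * Xbeam w h x :=
  integral_const_mul c _

theorem Xbeam_neg (w : ℝ × ℝ) (h : ℝ × ℝ → ℝ) (x : ℝ × ℝ) :
    Xbeam w (fun y => -h y) x = -Xbeam w h x :=
  integral_neg _

theorem Xbeam_Dir {g : ℝ × ℝ → ℝ} (hg : ContDiff ℝ 1 g) (hc : HasCompactSupport g)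
    {w : ℝ × ℝ} (hw : w ≠ 0) (x : ℝ × ℝ) : Xbeam w (Dir w g) x = -g x :=
  integral_Ioi_fderiv_comp_line hg hc x hw

theorem Dir_mk (h : ℝ × ℝ → ℝ) (a b : ℝ) (y : ℝ × ℝ) :
    Dir (a, b) h y = a * Dir (1, 0) h y + b * Dir (0, 1) h y := by
  have hab : ((a, b) : ℝ × ℝ) = a • ((1 : ℝ), (0 : ℝ)) + b • ((0 : ℝ), (1 : ℝ)) := by simp
  rw [Dir, hab, map_add, map_smul, map_smul, smul_eq_mul, smul_eq_mul]
  rfl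

theorem bilinear_apply_mk_mk (B : ℝ × ℝ →L[ℝ] ℝ × ℝ →L[ℝ] ℝ) (a b c d : ℝ) :
    B (a, b) (c, d) = a * c * B (1, 0) (1, 0) + a * d * B (1, 0) (0, 1)
      + b * c * B (0, 1) (1, 0) + b * d * B (0, 1) (0, 1) := by
  have hmk : ∀ p q : ℝ, ((p, q) : ℝ × ℝ) = p • ((1 : ℝ), (0 : ℝ)) + q • ((0 : ℝ), (1 : ℝ)) := by
    simp
  rw [hmk a b, hmk c d]
  simp only [map_add, map_smul, _root_.add_apply, _root_.smul_apply, smul_eq_mul]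
  ring

theorem Dir_Dir_eq_fderiv_fderiv {φ : ℝ × ℝ → ℝ} {y : ℝ × ℝ}
    (hφ : DifferentiableAt ℝ (fderiv ℝ φ) y) (v w : ℝ × ℝ) :
    Dir v (Dir w φ) y = fderiv ℝ (fderiv ℝ φ) y v w := by
  change fderiv ℝ (fun z => fderiv ℝ φ z w) y v = _
  rw [fderiv_clm_apply hφ (differentiableAt_const w)]
  simp

theorem Xbeam_Dir_Dir {φ : ℝ × ℝ → ℝ} (hφ : ContDiff ℝ 2 φ) (hc : HasCompactSupport φ)
    {w : ℝ × ℝ} (hw : w ≠ 0) (v x : ℝ × ℝ) : Xbeam w (Dir w (Dir v φ)) x = -Dir v φ x :=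
  Xbeam_Dir ((hφ.fderiv_right (m := 1) le_rfl).clm_apply contDiff_const)
    (hc.fderiv_apply (𝕜 := ℝ) v) hw x

/-- The components of the symmetric tensor field `f = d d⊥ φ`. -/
structure IsDDPerp (φ f11 f12 f22 : ℝ × ℝ → ℝ) : Prop where
  f11_eq : ∀ y, f11 y = -Dir (1, 0) (Dir (0, 1) φ) y
  f12_eq : ∀ y, f12 y = 1 / 2 * (Dir (1, 0) (Dir (1, 0) φ) y - Dir (0, 1) (Dir (0, 1) φ) y)
  f22_eq : ∀ y, f22 y = Dir (1, 0) (Dir (0, 1) φ) y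

namespace IsDDPerp

variable {φ f11 f12 f22 : ℝ × ℝ → ℝ}

theorem quadratic_eq (hf : IsDDPerp φ f11 f12 f22) (hφ : ContDiff ℝ 2 φ) (a b : ℝ)
    (y : ℝ × ℝ) :
    a ^ 2 * f11 y + 2 * a * b * f12 y + b ^ 2 * f22 y = Dir (a, b) (Dir (b, -a) φ) y := by
  have hφ' : DifferentiableAt ℝ (fderiv ℝ φ) y :=
    (hφ.fderiv_right (m := 1) le_rfl).differentiable one_ne_zero y
  have hsymm := (hφ.contDiffAt (x := y)).isSymmSndFDerivAt (by simp) (1, 0) (0, 1)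
  rw [hf.f11_eq, hf.f12_eq, hf.f22_eq]
  simp only [Dir_Dir_eq_fderiv_fderiv hφ']
  rw [bilinear_apply_mk_mk _ a b b (-a)]
  linear_combination b ^ 2 * hsymm

theorem quadratic_rotate_eq (hf : IsDDPerp φ f11 f12 f22) (hφ : ContDiff ℝ 2 φ) (a b : ℝ)
    (y : ℝ × ℝ) :
    b ^ 2 * f11 y - 2 * a * b * f12 y + a ^ 2 * f22 y = -Dir (a, b) (Dir (b, -a) φ) y := by
  have htrace : f11 y + f22 y = 0 := by rw [hf.f11_eq, hf.f22_eq]; ring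
  linear_combination (a ^ 2 + b ^ 2) * htrace - hf.quadratic_eq hφ a b y

theorem VlineL_eq (hf : IsDDPerp φ f11 f12 f22) (hφ : ContDiff ℝ 2 φ)
    (hc : HasCompactSupport φ) {u1 u2 : ℝ} (hu2 : u2 ≠ 0) (y : ℝ × ℝ) :
    VlineL u1 u2 f11 f12 f22 y = -(2 * u2) * Dir (1, 0) φ y := by
  have hu : ((u1, u2) : ℝ × ℝ) ≠ 0 := fun h => hu2 (congrArg Prod.snd h)
  have hv : ((-u1, u2) : ℝ × ℝ) ≠ 0 := fun h => hu2 (congrArg Prod.snd h)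
  have hLu : (fun y => u1 ^ 2 * f11 y + 2 * u1 * u2 * f12 y + u2 ^ 2 * f22 y)
      = Dir (u1, u2) (Dir (u2, -u1) φ) := funext (hf.quadratic_eq hφ u1 u2)
  have hLv : (fun y => u1 ^ 2 * f11 y - 2 * u1 * u2 * f12 y + u2 ^ 2 * f22 y)
      = Dir (-u1, u2) (Dir (u2, u1) φ) := funext fun y => by
    have h := hf.quadratic_eq hφ (-u1) u2 y
    rw [neg_neg] at h
    linear_combination h
  rw [VlineL, Pi.add_apply, hLu, hLv, Xbeam_Dir_Dir hφ hc hu, Xbeam_Dir_Dir hφ hc hv,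
    Dir_mk _ u2, Dir_mk _ u2]
  ring

theorem VlineT_eq (hf : IsDDPerp φ f11 f12 f22) (hφ : ContDiff ℝ 2 φ)
    (hc : HasCompactSupport φ) {u1 u2 : ℝ} (hu2 : u2 ≠ 0) (y : ℝ × ℝ) :
    VlineT u1 u2 f11 f12 f22 y = 2 * u2 * Dir (1, 0) φ y := by
  have hu : ((u1, u2) : ℝ × ℝ) ≠ 0 := fun h => hu2 (congrArg Prod.snd h)
  have hv : ((-u1, u2) : ℝ × ℝ) ≠ 0 := fun h => hu2 (congrArg Prod.snd h)
  have hTu : (fun y => u2 ^ 2 * f11 y - 2 * u1 * u2 * f12 y + u1 ^ 2 * f22 y)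
      = fun y => -Dir (u1, u2) (Dir (u2, -u1) φ) y := funext (hf.quadratic_rotate_eq hφ u1 u2)
  have hTv : (fun y => u2 ^ 2 * f11 y + 2 * u1 * u2 * f12 y + u1 ^ 2 * f22 y)
      = fun y => -Dir (-u1, u2) (Dir (u2, u1) φ) y := funext fun y => by
    have h := hf.quadratic_rotate_eq hφ (-u1) u2 y
    rw [neg_neg] at h
    linear_combination h
  rw [VlineT, Pi.add_apply, hTu, hTv, Xbeam_neg, Xbeam_neg, Xbeam_Dir_Dir hφ hc hu,
    Xbeam_Dir_Dir hφ hc hv, Dir_mk _ u2, Dir_mk _ u2]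
  ring

end IsDDPerp

theorem recover_potential_ddperp_general
    (u1 u2 : ℝ) (hu2 : 0 < u2)
    (φ : ℝ × ℝ → ℝ) (hφ : ContDiff ℝ 2 φ) (hsupp : SuppInDisc φ)
    (f11 f12 f22 : ℝ × ℝ → ℝ)
    (hf11 : ∀ y : ℝ × ℝ, f11 y =
      -fderiv ℝ (fun z => fderiv ℝ φ z ((0 : ℝ), (1 : ℝ))) y ((1 : ℝ), (0 : ℝ)))
    (hf12 : ∀ y : ℝ × ℝ, f12 y =
      (1 / 2) * (fderiv ℝ (fun z => fderiv ℝ φ z ((1 : ℝ), (0 : ℝ))) y ((1 : ℝ), (0 : ℝ)) -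
        fderiv ℝ (fun z => fderiv ℝ φ z ((0 : ℝ), (1 : ℝ))) y ((0 : ℝ), (1 : ℝ))))
    (hf22 : ∀ y : ℝ × ℝ, f22 y =
      fderiv ℝ (fun z => fderiv ℝ φ z ((0 : ℝ), (1 : ℝ))) y ((1 : ℝ), (0 : ℝ)))
    (x : ℝ × ℝ) :
    φ x = (1 / (2 * u2)) * Xbeam ((1 : ℝ), (0 : ℝ)) (VlineL u1 u2 f11 f12 f22) x ∧
    φ x = -(1 / (2 * u2)) * Xbeam ((1 : ℝ), (0 : ℝ)) (VlineT u1 u2 f11 f12 f22) x := by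
  have hf : IsDDPerp φ f11 f12 f22 := ⟨hf11, hf12, hf22⟩
  have hc : HasCompactSupport φ := hsupp.hasCompactSupport
  have hL := funext (hf.VlineL_eq hφ hc (u1 := u1) hu2.ne')
  have hT := funext (hf.VlineT_eq hφ hc (u1 := u1) hu2.ne')
  have hX : Xbeam (1, 0) (Dir (1, 0) φ) x = -φ x :=
    Xbeam_Dir (hφ.of_le one_le_two) hc (by simp) x
  rw [hL, hT, Xbeam_const_mul, Xbeam_const_mul, hX]
  constructor <;> field_simp

/-- reconstruction of a potential `φ` with `f = d d⊥ φ` from `Lf` or `Tf`. -/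
theorem recover_potential_ddperp
    (u1 u2 : ℝ) (hu : u1 ^ 2 + u2 ^ 2 = 1) (hu1 : 0 < u1) (hu2 : 0 < u2)
    (φ : ℝ × ℝ → ℝ) (hφ : ContDiff ℝ 2 φ) (hsupp : SuppInDisc φ)
    (f11 f12 f22 : ℝ × ℝ → ℝ)
    (hf11 : ∀ y : ℝ × ℝ, f11 y =
      -fderiv ℝ (fun z => fderiv ℝ φ z ((0 : ℝ), (1 : ℝ))) y ((1 : ℝ), (0 : ℝ)))
    (hf12 : ∀ y : ℝ × ℝ, f12 y =
      (1 / 2) * (fderiv ℝ (fun z => fderiv ℝ φ z ((1 : ℝ), (0 : ℝ))) y ((1 : ℝ), (0 : ℝ)) -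
        fderiv ℝ (fun z => fderiv ℝ φ z ((0 : ℝ), (1 : ℝ))) y ((0 : ℝ), (1 : ℝ))))
    (hf22 : ∀ y : ℝ × ℝ, f22 y =
      fderiv ℝ (fun z => fderiv ℝ φ z ((0 : ℝ), (1 : ℝ))) y ((1 : ℝ), (0 : ℝ)))
    (x : ℝ × ℝ) :
    φ x = (1 / (2 * u2)) * Xbeam ((1 : ℝ), (0 : ℝ)) (VlineL u1 u2 f11 f12 f22) x ∧
    φ x = -(1 / (2 * u2)) * Xbeam ((1 : ℝ), (0 : ℝ)) (VlineT u1 u2 f11 f12 f22) x :=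
  recover_potential_ddperp_general u1 u2 hu2 φ hφ hsupp f11 f12 f22 hf11 hf12 hf22 x
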